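/- Every minimal separator of a chordal graph is a clique. -/

import Mathlib

open SimpleGraph

variable {V : Type*}

noncomputable instance (priority := low) instFintypeSubsetOfFinite [Finite V] (s : Set V) :
    Fintype ↥s := Fintype.ofFinite _

/-- Eccentricity of a vertex: max distance to any vertex. -/
noncomputable def ecc [Fintype V] (G : SimpleGraph V) (x : V) : ℕ :=
  Finset.univ.sup (G.dist x)

/-- Radius: minimum eccentricity. -/
noncomputable def grad [Fintype V] (G : SimpleGraph V) : ℕ :=
  sInf (Set.range (ecc G))

/-- Diameter: maximum eccentricity. -/
noncomputable def gdiam [Fintype V] (G : SimpleGraph V) : ℕ :=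
  Finset.univ.sup (ecc G)

/-- The center: vertices of minimum eccentricity. -/
def center [Fintype V] (G : SimpleGraph V) : Set V :=
  {x | ecc G x = grad G}

/-- `G` has an induced cycle of length `n`. -/
def HasInducedCycle (G : SimpleGraph V) (n : ℕ) : Prop :=
  3 ≤ n ∧ ∃ f : ZMod n → V, Function.Injective f ∧
    ∀ i j : ZMod n, G.Adj (f i) (f j) ↔ (i = j + 1 ∨ j = i + 1)

/-- `G` is `k`-chordal: no induced cycle of length greater than `k`. -/
def KChordal (G : SimpleGraph V) (k : ℕ) : Prop :=
  ∀ n, k < n → ¬ HasInducedCycle G n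

/-- `S` separates `G`: two vertices outside `S` are not connected in `G - S`. -/
def IsSeparator (G : SimpleGraph V) (S : Set V) : Prop :=
  ∃ (a b : V) (ha : a ∉ S) (hb : b ∉ S), ¬ (G.induce Sᶜ).Reachable ⟨a, ha⟩ ⟨b, hb⟩

/-!
Let `a` and `b` be separated by `S`, and let `C ∋ a` and `D ∋ b` be their components in `G - S`.
By minimality every `s ∈ S` has a neighbour in `C` and one in `D`, since a walk from `a` to `b`
avoiding `S \ {s}` has to leave `C` through `s`. If `x, y ∈ S` were distinct and non-adjacent,
shortest `x`–`y` paths through `C ∪ {x, y}` and through `D ∪ {x, y}` would be induced paths of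
length at least two whose interiors lie in different components, so there are no edges between
them and they close up to an induced cycle of length at least four.
-/

lemma hasInducedCycle_of_adj_iff {G : SimpleGraph V} {n : ℕ} (hn : 3 ≤ n) (c : ℕ → V)
    (hinj : ∀ i j, i < j → j < n → c i ≠ c j)
    (hadj : ∀ i j, i < j → j < n → (G.Adj (c i) (c j) ↔ j = i + 1 ∨ (i = 0 ∧ j + 1 = n))) :
    HasInducedCycle G n := by
  have : Fact (1 < n) := ⟨by omega⟩
  have hsucc : ∀ i j : ZMod n, i = j + 1 ↔ i.val = j.val + 1 ∨ (i.val = 0 ∧ j.val + 1 = n) := by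
    intro i j
    rw [← (ZMod.val_injective n).eq_iff, ZMod.val_add, ZMod.val_one]
    have := i.val_lt
    have := j.val_lt
    rcases (by omega : j.val + 1 < n ∨ j.val + 1 = n) with h | h
    · rw [Nat.mod_eq_of_lt h]; constructor <;> intro <;> omega
    · rw [h, Nat.mod_self]; constructor <;> intro <;> omega
  refine ⟨hn, fun i => c i.val, fun i j h => ZMod.val_injective n ?_, fun i j => ?_⟩
  · by_contra hne
    rcases Nat.lt_or_gt_of_ne hne with hlt | hlt
    · exact hinj _ _ hlt j.val_lt h
    · exact hinj _ _ hlt i.val_lt h.symm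
  · rw [hsucc, hsucc]
    have := i.val_lt
    have := j.val_lt
    rcases lt_trichotomy i.val j.val with h | h | h
    · rw [hadj _ _ h j.val_lt]; constructor <;> intro <;> omega
    · simp only [h, G.loopless.irrefl, false_iff]; omega
    · rw [G.adj_comm, hadj _ _ h i.val_lt]; constructor <;> intro <;> omega

namespace SimpleGraph

variable {V' : Type*} {G : SimpleGraph V} {G' : SimpleGraph V'}

namespace Walk

variable {u v : V}

/-- Index form of `IsPath ∧ IsChordless`. -/
def IsInducedPath (p : G.Walk u v) : Prop :=
  p.IsPath ∧ ∀ ⦃i j : ℕ⦄, i + 1 < j → j ≤ p.length → ¬ G.Adj (p.getVert i) (p.getVert j)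

lemma isInducedPath_of_length_eq_dist {p : G.Walk u v} (hp : p.length = G.dist u v) :
    p.IsInducedPath := by
  refine ⟨p.isPath_of_length_eq_dist hp, fun i j hij hj hadj => ?_⟩
  have := G.dist_le ((p.take i).append (cons hadj (p.drop j)))
  simp only [length_append, length_cons, take_length, drop_length] at this
  omega

lemma IsInducedPath.map {p : G.Walk u v} (hp : p.IsInducedPath) (f : G ↪g G') :
    (p.map f.toHom).IsInducedPath := by
  refine ⟨hp.1.map f.injective, fun i j hij hj hadj => ?_⟩
  rw [getVert_map, getVert_map] at hadj
  rw [length_map] at hj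
  exact hp.2 hij hj (f.map_adj_iff.mp hadj)

lemma two_le_length (p : G.Walk u v) (hne : u ≠ v) (hadj : ¬ G.Adj u v) : 2 ≤ p.length := by
  by_contra! h
  rcases (by omega : p.length = 0 ∨ p.length = 1) with h | h
  · exact hne (eq_of_length_eq_zero h)
  · exact hadj (adj_of_length_eq_one h)

lemma hasInducedCycle_length {u : V} (c : G.Walk u u) (h3 : 3 ≤ c.length)
    (hinj : ∀ i j, i < j → j < c.length → c.getVert i ≠ c.getVert j)
    (hchord : ∀ i j, i + 1 < j → j < c.length → ¬ (i = 0 ∧ j + 1 = c.length) →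
      ¬ G.Adj (c.getVert i) (c.getVert j)) :
    HasInducedCycle G c.length := by
  refine hasInducedCycle_of_adj_iff h3 c.getVert hinj fun i j hij hj => ⟨fun h => ?_, ?_⟩
  · by_contra! hne
    exact hchord i j (by omega) hj (fun h0 => hne.2 h0.1 h0.2) h
  · rintro (rfl | ⟨rfl, hj⟩)
    · exact c.adj_getVert_succ (by omega)
    · have := c.adj_getVert_succ (i := j) (by omega)
      rw [hj, getVert_length] at this
      rw [getVert_zero]
      exact this.symm

lemma getVert_append_reverse {x y : V} (P Q : G.Walk x y) {t : ℕ}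
    (ht : P.length ≤ t) (ht' : t ≤ P.length + Q.length) :
    (P.append Q.reverse).getVert t = Q.getVert (P.length + Q.length - t) := by
  rw [getVert_append', getVert_reverse]
  split_ifs with h
  · rw [show t = P.length by omega, getVert_length,
      show P.length + Q.length - P.length = Q.length by omega, getVert_length]
  · congr 1; omega

lemma IsInducedPath.hasInducedCycle_append_reverse {x y : V} {P Q : G.Walk x y}
    (hP : P.IsInducedPath) (hQ : Q.IsInducedPath) (hP2 : 2 ≤ P.length) (hQ2 : 2 ≤ Q.length)
    {C D : Set V} (hPC : ∀ i, 0 < i → i < P.length → P.getVert i ∈ C)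
    (hQD : ∀ i, 0 < i → i < Q.length → Q.getVert i ∈ D) (hCD : Disjoint C D)
    (hCD' : ∀ c ∈ C, ∀ d ∈ D, ¬ G.Adj c d) :
    HasInducedCycle G (P.length + Q.length) := by
  set n := P.length + Q.length
  have hlen : (P.append Q.reverse).length = n := by
    rw [length_append, length_reverse]
  have hgetP : ∀ t, t ≤ P.length → (P.append Q.reverse).getVert t = P.getVert t := fun t ht => by
    rw [getVert_append', if_pos ht]
  have hgetQ : ∀ t, P.length ≤ t → t ≤ n → (P.append Q.reverse).getVert t = Q.getVert (n - t) :=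
    fun t ht ht' => getVert_append_reverse P Q ht ht'
  rw [← hlen]
  refine (P.append Q.reverse).hasInducedCycle_length (by omega) (fun i j hij hj => ?_)
    (fun i j hij hj hend => ?_) <;> rw [hlen] at hj
  · rcases le_or_gt j P.length with hjP | hjP
    · rw [hgetP i (by omega), hgetP j hjP]
      exact fun h => hij.ne (hP.1.getVert_injOn (by simp; omega) (by simp; omega) h)
    rcases le_or_gt P.length i with hiP | hiP
    · rw [hgetQ i hiP (by omega), hgetQ j (by omega) (by omega)]
      exact fun h => (show n - j < n - i by omega).ne
        (hQ.1.getVert_injOn (by simp; omega) (by simp; omega) h.symm)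
    rw [hgetP i hiP.le, hgetQ j hjP.le (by omega)]
    rcases Nat.eq_zero_or_pos i with rfl | hi0
    · rw [getVert_zero, ne_comm, Ne, hQ.1.getVert_eq_start_iff (by omega)]
      omega
    · exact hCD.ne_of_mem (hPC i hi0 hiP) (hQD (n - j) (by omega) (by omega))
  · rcases le_or_gt j P.length with hjP | hjP
    · rw [hgetP i (by omega), hgetP j hjP]
      exact hP.2 hij hjP
    rcases le_or_gt P.length i with hiP | hiP
    · rw [hgetQ i hiP (by omega), hgetQ j (by omega) (by omega), G.adj_comm]
      exact hQ.2 (by omega) (by omega)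
    rw [hgetP i hiP.le, hgetQ j hjP.le (by omega)]
    rcases Nat.eq_zero_or_pos i with rfl | hi0
    · simpa only [getVert_zero] using hQ.2 (i := 0) (j := n - j) (by omega) (by omega)
    · exact hCD' _ (hPC i hi0 hiP) _ (hQD (n - j) (by omega) (by omega))

end Walk

lemma Reachable.exists_walk_of_induce {s : Set V} {u v : s} (h : (G.induce s).Reachable u v) :
    ∃ p : G.Walk u v, ∀ w ∈ p.support, w ∈ s := by
  obtain ⟨q⟩ := h
  have hq : ∀ w ∈ (q.map (Embedding.induce s).toHom).support, w ∈ s := fun w hw => by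
    rw [Walk.support_map, List.mem_map] at hw
    obtain ⟨w, -, rfl⟩ := hw
    exact w.2
  exact ⟨_, hq⟩

lemma Reachable.exists_isInducedPath_of_induce {s : Set V} {u v : s}
    (h : (G.induce s).Reachable u v) :
    ∃ P : G.Walk u v, P.IsInducedPath ∧ ∀ i, P.getVert i ∈ s := by
  obtain ⟨p, hp⟩ := h.exists_walk_length_eq_dist
  have hP : ∀ i, (p.map (Embedding.induce s).toHom).getVert i ∈ s := fun i => by
    rw [Walk.getVert_map]
    exact (p.getVert i).2
  exact ⟨_, (Walk.isInducedPath_of_length_eq_dist hp).map _, hP⟩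

namespace ComponentCompl

variable {K : Set V} {C D : G.ComponentCompl K}

lemma exists_walk {u v : V} (hu : u ∈ C) (hv : v ∈ C) :
    ∃ p : G.Walk u v, ∀ w ∈ p.support, w ∈ C := by
  classical
  obtain ⟨huK, rfl⟩ := hu
  obtain ⟨hvK, hv⟩ := hv
  obtain ⟨q⟩ := ConnectedComponent.exact hv.symm
  have hq : ∀ w ∈ (q.map (Embedding.induce Kᶜ).toHom).support, w ∈ G.componentComplMk huK :=
    fun w hw => by
      rw [Walk.support_map, List.mem_map] at hw
      obtain ⟨w, hw, rfl⟩ := hw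
      exact ⟨w.2, ConnectedComponent.sound ⟨(q.takeUntil w hw).reverse⟩⟩
  exact ⟨_, hq⟩

lemma not_adj_of_ne (hCD : C ≠ D) {c d : V} (hc : c ∈ C) (hd : d ∈ D) : ¬ G.Adj c d :=
  fun h => Set.disjoint_left.mp (ComponentCompl.pairwise_disjoint hCD) hc
    (mem_of_adj d c hd (notMem_of_mem hc) h.symm)

lemma exists_isInducedPath (C : G.ComponentCompl K) {x y cx cy : V} (hcx : cx ∈ C)
    (hcy : cy ∈ C) (hx : G.Adj x cx) (hy : G.Adj y cy) :
    ∃ P : G.Walk x y, P.IsInducedPath ∧ ∀ i, 0 < i → i < P.length → P.getVert i ∈ C := by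
  obtain ⟨p, hp⟩ := exists_walk hcx hcy
  let w := Walk.cons hx (p.concat hy.symm)
  have hw : ∀ v ∈ w.support, v ∈ insert x (insert y (C : Set V)) := by
    intro v hv
    simp only [w, Walk.support_cons, Walk.support_concat, List.mem_cons, List.mem_append,
      List.mem_nil_iff, or_false] at hv
    rcases hv with rfl | hv | rfl
    · exact .inl rfl
    · exact .inr (.inr (hp v hv))
    · exact .inr (.inl rfl)
  obtain ⟨P, hP, hPT⟩ := (w.induce _ hw).reachable.exists_isInducedPath_of_induce
  refine ⟨P, hP, fun i hi hiP => ?_⟩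
  rcases hPT i with h | h | h
  · exact absurd ((hP.1.getVert_eq_start_iff hiP.le).mp h) hi.ne'
  · exact absurd ((hP.1.getVert_eq_end_iff hiP.le).mp h) hiP.ne
  · exact h

end ComponentCompl

lemma exists_adj_mem_of_not_isSeparator_diff {S : Set V} {s : V}
    (hns : ¬ IsSeparator G (S \ {s})) (C : G.ComponentCompl S) {b : V} (hb : b ∉ S)
    (hbC : b ∉ C) : ∃ c ∈ C, G.Adj s c := by
  obtain ⟨a, haS, haC⟩ := C.exists_eq_mk
  have hab : (G.induce (S \ {s})ᶜ).Reachable ⟨a, fun h => haS h.1⟩ ⟨b, fun h => hb h.1⟩ :=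
    by_contra fun h => hns ⟨a, b, _, _, h⟩
  obtain ⟨p, hp⟩ := hab.exists_walk_of_induce
  obtain ⟨d, hd, hdC, hdC'⟩ := p.exists_boundary_dart (C : Set V) ⟨haS, haC⟩ hbC
  have hdS : d.snd ∈ S := by
    by_contra h
    exact hdC' (C.mem_of_adj _ _ hdC h d.adj)
  have hds : d.snd = s := by
    by_contra h
    exact hp _ (p.dart_snd_mem_support_of_mem_darts hd) ⟨hdS, h⟩
  exact ⟨d.fst, hdC, hds ▸ d.adj.symm⟩

end SimpleGraph

theorem minimal_separator_is_clique (G : SimpleGraph V) (hch : KChordal G 3)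
    (S : Set V) (hS : IsSeparator G S) (hmin : ∀ T ⊂ S, ¬ IsSeparator G T) :
    G.IsClique S := by
  obtain ⟨a, b, ha, hb, hab⟩ := hS
  set C := G.componentComplMk ha
  set D := G.componentComplMk hb
  have hbC : b ∉ C := fun ⟨_, h⟩ => hab (ConnectedComponent.exact h.symm)
  have haD : a ∉ D := fun ⟨_, h⟩ => hab (ConnectedComponent.exact h)
  have hCD : C ≠ D := fun h => hbC (h ▸ G.componentComplMk_mem hb)
  have hfull : ∀ s ∈ S, (∃ c ∈ C, G.Adj s c) ∧ ∃ d ∈ D, G.Adj s d := fun s hs =>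
    have hns := hmin _ (Set.sdiff_singleton_ssubset.mpr hs)
    ⟨exists_adj_mem_of_not_isSeparator_diff hns C hb hbC,
      exists_adj_mem_of_not_isSeparator_diff hns D ha haD⟩
  intro x hx y hy hxy
  by_contra hadj
  obtain ⟨⟨cx, hcx, hxcx⟩, dx, hdx, hxdx⟩ := hfull x hx
  obtain ⟨⟨cy, hcy, hycy⟩, dy, hdy, hydy⟩ := hfull y hy
  obtain ⟨P, hP, hPC⟩ := C.exists_isInducedPath hcx hcy hxcx hycy
  obtain ⟨Q, hQ, hQD⟩ := D.exists_isInducedPath hdx hdy hxdx hydy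
  have hP2 := P.two_le_length hxy hadj
  have hQ2 := Q.two_le_length hxy hadj
  exact hch _ (by omega) (hP.hasInducedCycle_append_reverse hQ hP2 hQ2 hPC hQD
    (ComponentCompl.pairwise_disjoint hCD) fun _ hc _ hd => ComponentCompl.not_adj_of_ne hCD hc hd)
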